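/- (Main Theorem: representation of the Jacobi identity.) Assume ∇ ∘ j = 0, ev_ψ(j^a_{iα}) = 0 for every ψ ∈ Ē := ker ∇ and all a, i, α, and Λ is skew-adjoint (Λ* = −Λ as maps on finitely supported families). For R ∈ F set δR = j*(∂R), φ(R) = j(Λ(δR)), and {K,L} := ⟨δK, Λ(δL)⟩ ∈ F. Then for all K, L, M ∈ F: (⟨δK, Λ(δ{L,M})⟩ + ⟨δL, Λ(δ{M,K})⟩ + ⟨δM, Λ(δ{K,L})⟩) − (⟨δK, [ev_{φ(L)},Λ](δM)⟩ + ⟨δL, [ev_{φ(M)},Λ](δK)⟩ + ⟨δM, [ev_{φ(K)},Λ](δL)⟩) ∈ Div F^M, where [ev_ψ, Λ] denotes the operator with coefficients ev_ψ(Λ^{αβ}_i), i.e. ([ev_ψ,Λ]f)^α = Σ_{β,i} ev_ψ(Λ^{αβ}_i)·D^i f_β. -/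

import Mathlib

noncomputable section

variable {𝔽 : Type*} [Field 𝔽] {F : Type*} [CommRing F] [Algebra 𝔽 F] {m : ℕ}
  {A A' : Type*}

/-- Membership in the space of divergences `Div F^M = {Σ_μ D_μ ψ^μ}`. -/
def IsDiv (D : Fin m → Derivation 𝔽 F F) (f : F) : Prop :=
  ∃ ψ : Fin m → F, f = ∑ μ, D μ (ψ μ)

/-- The evolutionary differentiation `ev_φ f = Σ_a φ^a · ∂_a f` (a finite sum). -/
def ev (pa : A → Derivation 𝔽 F F) (φ : A → F) (f : F) : F :=
  ∑ᶠ a, φ a * pa a f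

/-- `(∇φ)^a_μ = D_μ φ^a + Σ_b Γ^a_{μb} · φ^b`; here `Γ b μ a` denotes `Γ^b_{μa}`. -/
def nabla (D : Fin m → Derivation 𝔽 F F) (Γ : A → Fin m → A → F)
    (φ : A → F) (a : A) (μ : Fin m) : F :=
  D μ (φ a) + ∑ᶠ b, Γ a μ b * φ b

/-- `(∇*χ)_a = -Σ_μ D_μ χ^μ_a + Σ_{μ,b} Γ^b_{μa} · χ^μ_b`. -/
def nablaStar (D : Fin m → Derivation 𝔽 F F) (Γ : A → Fin m → A → F)
    (χ : Fin m → A → F) (a : A) : F :=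
  -∑ μ, D μ (χ μ a) + ∑ᶠ b, ∑ μ, Γ b μ a * χ μ b

/-- The pairing `⟨f, φ⟩ = Σ_a f_a · φ^a`. -/
def pair (f φ : A → F) : F := ∑ᶠ a, f a * φ a

/-- `D^i = D_1^{i^1} ∘ ⋯ ∘ D_m^{i^m}`. -/
def Dpow (D : Fin m → Derivation 𝔽 F F) (i : Fin m → ℕ) : F → F :=
  (List.finRange m).foldr (fun μ g => (⇑(D μ))^[i μ] ∘ g) id

/-- `|i| = i^1 + ⋯ + i^m`. -/
def msize {m : ℕ} (i : Fin m → ℕ) : ℕ := ∑ μ, i μ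

/-- The differential operator `P(D)L = Σ_i P_i · D^i L`. -/
def applyP (D : Fin m → Derivation 𝔽 F F) (P : (Fin m → ℕ) → F) (L : F) : F :=
  ∑ᶠ i, P i * Dpow D i L

/-- The Lagrange dual operator `P*(D)K = Σ_i (-1)^{|i|} D^i (P_i · K)`. -/
def applyPstar (D : Fin m → Derivation 𝔽 F F) (P : (Fin m → ℕ) → F) (K : F) : F :=
  ∑ᶠ i, (-1 : F) ^ msize i * Dpow D i (P i * K)

/-- The jet map `(jφ)^a = Σ_{i,α} j^a_{iα} · D^i φ^α`; here `jc a i α` denotes `j^a_{iα}`. -/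
def jmap (D : Fin m → Derivation 𝔽 F F) (jc : A → (Fin m → ℕ) → A' → F)
    (φ : A' → F) (a : A) : F :=
  ∑ᶠ i, ∑ᶠ α, jc a i α * Dpow D i (φ α)

/-- The Lagrange dual `(j*f)_α = Σ_{a,i} (-1)^{|i|} D^i (j^a_{iα} · f_a)`. -/
def jstar (D : Fin m → Derivation 𝔽 F F) (jc : A → (Fin m → ℕ) → A' → F)
    (f : A → F) (α : A') : F :=
  ∑ᶠ a, ∑ᶠ i, (-1 : F) ^ msize i * Dpow D i (jc a i α * f a)

/-- `(Λf)^α = Σ_{β,i} Λ^{αβ}_i · D^i f_β`; here `Λc α β i` denotes `Λ^{αβ}_i`. -/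
def Lam (D : Fin m → Derivation 𝔽 F F) (Λc : A' → A' → (Fin m → ℕ) → F)
    (f : A' → F) (α : A') : F :=
  ∑ᶠ β, ∑ᶠ i, Λc α β i * Dpow D i (f β)

/-- The Lagrange dual `(Λ*f)^α = Σ_{β,i} (-1)^{|i|} D^i (Λ^{βα}_i · f_β)`. -/
def LamStar (D : Fin m → Derivation 𝔽 F F) (Λc : A' → A' → (Fin m → ℕ) → F)
    (f : A' → F) (α : A') : F :=
  ∑ᶠ β, ∑ᶠ i, (-1 : F) ^ msize i * Dpow D i (Λc β α i * f β)

/-- The variational derivative `δR = j*(∂R)`, where `∂R = (∂_a R)`. -/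
def vard (D : Fin m → Derivation 𝔽 F F) (pa : A → Derivation 𝔽 F F)
    (jc : A → (Fin m → ℕ) → A' → F) (R : F) : A' → F :=
  jstar D jc (fun a => pa a R)

/-- The Hamiltonian vector `φ(R) = j(Λ(δR))`. -/
def hamv (D : Fin m → Derivation 𝔽 F F) (pa : A → Derivation 𝔽 F F)
    (jc : A → (Fin m → ℕ) → A' → F) (Λc : A' → A' → (Fin m → ℕ) → F) (R : F) : A → F :=
  jmap D jc (Lam D Λc (vard D pa jc R))

/-- The commutator `[ev_ψ, Λ]`, acting with coefficients `ev_ψ(Λ^{αβ}_i)`. -/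
def evLam (D : Fin m → Derivation 𝔽 F F) (pa : A → Derivation 𝔽 F F)
    (Λc : A' → A' → (Fin m → ℕ) → F) (ψ : A → F) (f : A' → F) (α : A') : F :=
  ∑ᶠ β, ∑ᶠ i, ev pa ψ (Λc α β i) * Dpow D i (f β)

/-!
Modulo divergences, `{K, R} ≡ -ev_{φ(K)} R`: integrate `j*` by parts and use the
skew-adjointness of `Λ`. As `φ(K)` lies in `ker ∇`, the derivation `ev_{φ(K)}` commutes with
every `D_μ` and kills the coefficients of `j`. Expanding `ev_{φ(K)} {L, M} = ev_{φ(K)} ⟨δL, Λ δM⟩`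
by the Leibniz rule, the terms in which `ev_{φ(K)}` hits `δL` or `δM` become, after integration
by parts, Hessian pairings `Σ_{a,b} φ(K)^b φ(N)^a ∂_a ∂_b R`, and the term in which it hits `Λ`
is a commutator term. In the cyclic sum the Hessian pairings cancel because `∂_a ∂_b = ∂_b ∂_a`,
and the remaining commutator terms are those of the statement, up to one more use of
skew-adjointness.
-/

open Function

lemma finsum_finsum_eq_sum_sum {α β M : Type*} [AddCommMonoid M] {f : α → β → M}
    {s : Finset α} {t : Finset β} (h : ∀ a b, f a b ≠ 0 → a ∈ s ∧ b ∈ t) :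
    ∑ᶠ a, ∑ᶠ b, f a b = ∑ a ∈ s, ∑ b ∈ t, f a b := by
  rw [finsum_eq_sum_of_support_subset _ (s := s) fun a ha => ?_]
  · exact Finset.sum_congr rfl fun a _ =>
      finsum_eq_sum_of_support_subset _ fun b hb => (h a b hb).2
  · obtain ⟨b, hb⟩ : ∃ b, f a b ≠ 0 := by
      by_contra! h0
      exact ha (finsum_eq_zero_of_forall_eq_zero h0)
    exact (h a b hb).1

lemma exists_finset_bound_of_finite {ι κ β : Type*} {S : ι → Set (κ × β)}
    (hS : ∀ a, (S a).Finite) (s : Finset ι) :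
    ∃ (I : Finset κ) (B : Finset β), ∀ a ∈ s, ∀ p ∈ S a, p.1 ∈ I ∧ p.2 ∈ B := by
  have hT : (⋃ a ∈ s, S a).Finite := s.finite_toSet.biUnion fun a _ => hS a
  refine ⟨(hT.image Prod.fst).toFinset, (hT.image Prod.snd).toFinset, fun a ha p hp => ?_⟩
  have hpT : p ∈ ⋃ a ∈ s, S a := Set.mem_biUnion ha hp
  exact ⟨(hT.image Prod.fst).mem_toFinset.2 ⟨p, hpT, rfl⟩,
    (hT.image Prod.snd).mem_toFinset.2 ⟨p, hpT, rfl⟩⟩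

section Pairing

variable {B : Type*}

lemma pair_eq_sum {f φ : B → F} {s : Finset B} (h : ∀ a, f a ≠ 0 → a ∈ s) :
    pair f φ = ∑ a ∈ s, f a * φ a :=
  finsum_eq_sum_of_support_subset _ fun a ha => h a (left_ne_zero_of_mul ha)

lemma pair_add_right {f : B → F} (hf : (support f).Finite) (φ χ : B → F) :
    pair f (φ + χ) = pair f φ + pair f χ := by
  simp only [pair_eq_sum fun α hα => hf.mem_toFinset.2 hα, Pi.add_apply, mul_add,
    Finset.sum_add_distrib]

lemma pair_neg_left (f φ : B → F) : pair (-f) φ = -pair f φ := by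
  simp only [pair, Pi.neg_apply, neg_mul, finsum_neg_distrib]

lemma pair_comm (f φ : B → F) : pair f φ = pair φ f := by
  simp only [pair, mul_comm]

end Pairing

section Divergences

variable (D : Fin m → Derivation 𝔽 F F)

def divergences : Submodule 𝔽 F :=
  LinearMap.range (∑ μ, (D μ).toLinearMap ∘ₗ LinearMap.proj μ)

def HasAdjointSign (T : F → F) (n : ℕ) : Prop :=
  ∀ w g, T w * g ≡ (-1 : F) ^ n * (w * T g) [SMOD divergences D]

variable {D}

lemma isDiv_iff_mem_divergences {f : F} : IsDiv D f ↔ f ∈ divergences D := by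
  simp [IsDiv, divergences, eq_comm]

lemma apply_mem_divergences (μ : Fin m) (x : F) : D μ x ∈ divergences D :=
  isDiv_iff_mem_divergences.1 ⟨Pi.single μ x, by
    rw [Fintype.sum_eq_single μ fun ν hν => by simp [hν], Pi.single_eq_same]⟩

lemma SModEq.neg_one_pow_mul {U : Submodule 𝔽 F} {x y : F} (h : x ≡ y [SMOD U]) (n : ℕ) :
    (-1 : F) ^ n * x ≡ (-1 : F) ^ n * y [SMOD U] := by
  rcases neg_one_pow_eq_or F n with hn | hn <;> simp [hn, h, h.neg]

lemma hasAdjointSign_id : HasAdjointSign D id 0 := fun w g => by simp [SModEq.refl]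

lemma hasAdjointSign_D (μ : Fin m) : HasAdjointSign D (D μ) 1 := fun w g => by
  rw [← sub_smodEq_zero, SModEq.zero]
  convert apply_mem_divergences μ (w * g) using 1
  simp only [Derivation.leibniz, smul_eq_mul]
  ring

lemma HasAdjointSign.comp {T₁ T₂ : F → F} {n₁ n₂ : ℕ} (h₁ : HasAdjointSign D T₁ n₁)
    (h₂ : HasAdjointSign D T₂ n₂) (hc : Function.Commute T₁ T₂) :
    HasAdjointSign D (T₁ ∘ T₂) (n₁ + n₂) := fun w g => calc
  T₁ (T₂ w) * g ≡ (-1 : F) ^ n₁ * (T₂ w * T₁ g) [SMOD divergences D] := h₁ _ _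
  _ ≡ (-1 : F) ^ n₁ * ((-1 : F) ^ n₂ * (w * T₂ (T₁ g))) [SMOD divergences D] :=
    (h₂ _ _).neg_one_pow_mul n₁
  _ = (-1 : F) ^ (n₁ + n₂) * (w * T₁ (T₂ g)) := by rw [hc g, pow_add]; ring

lemma HasAdjointSign.iterate {T : F → F} {n : ℕ} (h : HasAdjointSign D T n) (k : ℕ) :
    HasAdjointSign D T^[k] (n * k) := by
  induction k with
  | zero => exact hasAdjointSign_id
  | succ k ih =>
    rw [iterate_succ', mul_add_one, add_comm]
    exact h.comp ih (Function.Commute.self_iterate T k)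

end Divergences

section Dpow

variable (D : Fin m → Derivation 𝔽 F F)

lemma commute_foldr_iterate {g : F → F} (hg : ∀ μ, Function.Commute g (D μ)) (i : Fin m → ℕ)
    (l : List (Fin m)) : Function.Commute g (l.foldr (fun μ h => (⇑(D μ))^[i μ] ∘ h) id) := by
  induction l with
  | nil => exact Function.Commute.id_right
  | cons μ l ih => exact ((hg μ).iterate_right (i μ)).comp_right ih

lemma commute_Dpow {g : F → F} (hg : ∀ μ, Function.Commute g (D μ)) (i : Fin m → ℕ) :
    Function.Commute g (Dpow D i) :=
  commute_foldr_iterate D hg i _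

lemma Dpow_zero (i : Fin m → ℕ) : Dpow D i 0 = 0 := by
  unfold Dpow
  induction List.finRange m with
  | nil => rfl
  | cons μ l ih => simp only [List.foldr_cons, comp_apply, ih, iterate_map_zero]

lemma hasAdjointSign_Dpow (hDcomm : ∀ μ ν (f : F), D μ (D ν f) = D ν (D μ f))
    (i : Fin m → ℕ) : HasAdjointSign D (Dpow D i) (msize i) := by
  rw [Dpow, msize, Fin.sum_univ_def]
  induction List.finRange m with
  | nil => exact hasAdjointSign_id
  | cons μ l ih =>
    have hμ := (hasAdjointSign_D (D := D) μ).iterate (i μ)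
    rw [one_mul] at hμ
    exact hμ.comp ih (commute_foldr_iterate D
      (fun ν => Function.Commute.iterate_left (fun f => hDcomm μ ν f) _) i l)

end Dpow

section Ev

variable {pa : A → Derivation 𝔽 F F}

lemma ev_eq_sum {ψ : A → F} {x : F} {s : Finset A} (hs : ∀ a ∉ s, pa a x = 0) :
    ev pa ψ x = ∑ a ∈ s, ψ a * pa a x :=
  finsum_eq_sum_of_support_subset _ fun a ha => by
    by_contra h
    exact ha (by simp [hs a h])

lemma ev_eq_pair (ψ : A → F) (x : F) : ev pa ψ x = pair ψ fun a => pa a x := rfl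

@[simp]
lemma ev_zero (ψ : A → F) : ev pa ψ 0 = 0 := by
  simp [ev]

variable (hpafin : ∀ f : F, {a : A | pa a f ≠ 0}.Finite)
include hpafin

lemma exists_finset_support_pa (x y : F) :
    ∃ s : Finset A, (∀ a ∉ s, pa a x = 0) ∧ ∀ a ∉ s, pa a y = 0 := by
  classical
  exact ⟨(hpafin x).toFinset ∪ (hpafin y).toFinset, fun a ha => by simp_all,
    fun a ha => by simp_all⟩

def evDerivation (ψ : A → F) : Derivation 𝔽 F F :=
  Derivation.mk'
    { toFun := ev pa ψ
      map_add' := fun x y => by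
        obtain ⟨s, hx, hy⟩ := exists_finset_support_pa hpafin x y
        rw [ev_eq_sum hx, ev_eq_sum hy, ev_eq_sum (x := x + y) fun a ha => by
          rw [map_add, hx a ha, hy a ha, add_zero], ← Finset.sum_add_distrib]
        simp only [map_add, mul_add]
      map_smul' := fun c x => by
        obtain ⟨s, hx, -⟩ := exists_finset_support_pa hpafin x x
        rw [ev_eq_sum hx, ev_eq_sum (x := c • x) fun a ha => by
          rw [Derivation.map_smul, hx a ha, smul_zero], RingHom.id_apply, Finset.smul_sum]
        simp only [Derivation.map_smul, mul_smul_comm] }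
    fun x y => by
      obtain ⟨s, hx, hy⟩ := exists_finset_support_pa hpafin x y
      simp only [LinearMap.coe_mk, AddHom.coe_mk, smul_eq_mul]
      rw [ev_eq_sum hx, ev_eq_sum hy, ev_eq_sum (x := x * y) fun a ha => by
        rw [Derivation.leibniz, hx a ha, hy a ha, smul_zero, smul_zero, add_zero],
        Finset.mul_sum, Finset.mul_sum, ← Finset.sum_add_distrib]
      simp only [Derivation.leibniz, smul_eq_mul]
      exact Finset.sum_congr rfl fun a _ => by ring

lemma coe_evDerivation (ψ : A → F) : ⇑(evDerivation hpafin ψ) = ev pa ψ := rfl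

lemma ev_sum (ψ : A → F) {ι : Type*} (s : Finset ι) (x : ι → F) :
    ev pa ψ (∑ i ∈ s, x i) = ∑ i ∈ s, ev pa ψ (x i) :=
  map_sum (evDerivation hpafin ψ) x s

lemma ev_neg (ψ : A → F) (x : F) : ev pa ψ (-x) = -ev pa ψ x :=
  map_neg (evDerivation hpafin ψ) x

lemma ev_mul (ψ : A → F) (x y : F) : ev pa ψ (x * y) = ev pa ψ x * y + x * ev pa ψ y := by
  change evDerivation hpafin ψ _ = evDerivation hpafin ψ x * y + x * evDerivation hpafin ψ y
  rw [Derivation.leibniz, smul_eq_mul, smul_eq_mul]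
  ring

lemma ev_neg_one_pow_mul (ψ : A → F) (n : ℕ) (x : F) :
    ev pa ψ ((-1 : F) ^ n * x) = (-1 : F) ^ n * ev pa ψ x := by
  change evDerivation hpafin ψ _ = _ * evDerivation hpafin ψ x
  rcases neg_one_pow_eq_or F n with h | h <;> simp only [h, one_mul, neg_one_mul, map_neg]

lemma ev_pair (ψ : A → F) {f : A' → F} (hf : (support f).Finite) (φ : A' → F) :
    ev pa ψ (pair f φ) = pair (fun α => ev pa ψ (f α)) φ + pair f (fun α => ev pa ψ (φ α)) := by
  have hs : ∀ α, f α ≠ 0 → α ∈ hf.toFinset := fun α hα => hf.mem_toFinset.2 hα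
  rw [pair_eq_sum hs, pair_eq_sum hs, pair_eq_sum fun α hα => hs α fun h0 => hα (by simp [h0]),
    ev_sum hpafin, ← Finset.sum_add_distrib]
  exact Finset.sum_congr rfl fun α _ => ev_mul hpafin ψ _ _

end Ev

lemma D_ev_sub_ev_D {D : Fin m → Derivation 𝔽 F F} {pa : A → Derivation 𝔽 F F}
    {Γ : A → Fin m → A → F} (hpafin : ∀ f : F, {a : A | pa a f ≠ 0}.Finite)
    (hΓfin : ∀ b : A, {p : Fin m × A | Γ b p.1 p.2 ≠ 0}.Finite)
    (hΓ : ∀ (μ : Fin m) (a : A) (f : F),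
      D μ (pa a f) - pa a (D μ f) = ∑ᶠ b, Γ b μ a * pa b f)
    (ψ : A → F) (μ : Fin m) (f : F) :
    D μ (ev pa ψ f) - ev pa ψ (D μ f) = ev pa (fun a => nabla D Γ ψ a μ) f := by
  classical
  obtain ⟨_, B, hB⟩ := exists_finset_bound_of_finite hΓfin (hpafin f).toFinset
  set u := (hpafin f).toFinset ∪ (hpafin (D μ f)).toFinset ∪ B
  have hf : ∀ a ∉ u, pa a f = 0 := fun a ha => by by_contra h; simp_all [u]
  have hDf : ∀ a ∉ u, pa a (D μ f) = 0 := fun a ha => by by_contra h; simp_all [u]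
  have hΓu : ∀ a b, pa a f ≠ 0 → Γ a μ b ≠ 0 → b ∈ u := fun a b ha hb =>
    Finset.mem_union_right _ (hB a (by simpa using ha) (μ, b) hb).2
  -- the two `Γ`-terms of `D μ (ψ a * pa a f)` are the two orders of one double sum
  let X : A → A → F := fun a b => ψ a * (Γ b μ a * pa b f)
  have hX : ∀ a b, X a b ≠ 0 → a ∈ u ∧ b ∈ u := fun a b h => by
    have hb : pa b f ≠ 0 := right_ne_zero_of_mul (right_ne_zero_of_mul h)
    exact ⟨hΓu b a hb (left_ne_zero_of_mul (right_ne_zero_of_mul h)),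
      by_contra fun hbu => hb (hf b hbu)⟩
  have hswap : ∑ a ∈ u, ∑ᶠ b, X a b = ∑ a ∈ u, ∑ᶠ b, X b a := by
    have hsum : ∀ Y : A → A → F, (∀ a b, Y a b ≠ 0 → b ∈ u) →
        ∑ a ∈ u, ∑ᶠ b, Y a b = ∑ a ∈ u, ∑ b ∈ u, Y a b := fun Y hY =>
      Finset.sum_congr rfl fun a _ => finsum_eq_sum_of_support_subset _ fun b hb => hY a b hb
    rw [hsum X fun a b h => (hX a b h).2, hsum (fun a b => X b a) fun a b h => (hX b a h).1,
      Finset.sum_comm]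
  have hterm : ∀ a, D μ (ψ a * pa a f) - ψ a * pa a (D μ f)
      = nabla D Γ ψ a μ * pa a f + (∑ᶠ b, X a b - ∑ᶠ b, X b a) := fun a => by
    have hΓa : HasFiniteSupport fun b => Γ a μ b * ψ b :=
      ((hΓfin a).image Prod.snd).subset fun b hb => ⟨(μ, b), left_ne_zero_of_mul hb, rfl⟩
    have hpaf : HasFiniteSupport fun b => Γ b μ a * pa b f :=
      (hpafin f).subset fun b hb => right_ne_zero_of_mul hb
    have hXa : ∑ᶠ b, X a b = ψ a * ∑ᶠ b, Γ b μ a * pa b f := (mul_finsum' _ _ hpaf).symm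
    have hXa' : ∑ᶠ b, X b a = (∑ᶠ b, Γ a μ b * ψ b) * pa a f := by
      rw [finsum_mul' _ _ hΓa]
      exact finsum_congr fun b => by ring
    rw [hXa, hXa', ← hΓ, nabla, Derivation.leibniz, smul_eq_mul, smul_eq_mul]
    ring
  rw [ev_eq_sum hf, ev_eq_sum hDf, ev_eq_sum hf, map_sum, ← Finset.sum_sub_distrib,
    Finset.sum_congr rfl fun a _ => hterm a, Finset.sum_add_distrib, Finset.sum_sub_distrib,
    hswap, sub_self, add_zero]

section Operators

variable {D : Fin m → Derivation 𝔽 F F} {c : A → (Fin m → ℕ) → A' → F}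

lemma jmap_eq_sum {I : Finset (Fin m → ℕ)} {B : Finset A'} {a : A}
    (h : ∀ i α, c a i α ≠ 0 → i ∈ I ∧ α ∈ B) (g : A' → F) :
    jmap D c g a = ∑ i ∈ I, ∑ α ∈ B, c a i α * Dpow D i (g α) :=
  finsum_finsum_eq_sum_sum fun i α hne => h i α (left_ne_zero_of_mul hne)

lemma jstar_eq_sum {v : A → F} {s : Finset A} {I : Finset (Fin m → ℕ)} (hv : ∀ a ∉ s, v a = 0)
    (hI : ∀ a ∈ s, ∀ i α, c a i α ≠ 0 → i ∈ I) (α : A') :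
    jstar D c v α = ∑ a ∈ s, ∑ i ∈ I, (-1 : F) ^ msize i * Dpow D i (c a i α * v a) :=
  finsum_finsum_eq_sum_sum fun a i hne => by
    have hcv : c a i α * v a ≠ 0 := fun h0 => hne (by rw [h0, Dpow_zero, mul_zero])
    have ha : a ∈ s := by_contra fun ha => hcv (by rw [hv a ha, mul_zero])
    exact ⟨ha, hI a ha i α (left_ne_zero_of_mul hcv)⟩

lemma jstar_apply_eq_zero {v : A → F} {s : Finset A} {α : A'} (hv : ∀ a ∉ s, v a = 0)
    (hα : ∀ a ∈ s, ∀ i, c a i α = 0) : jstar D c v α = 0 :=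
  finsum_eq_zero_of_forall_eq_zero fun a => finsum_eq_zero_of_forall_eq_zero fun i => by
    by_cases ha : a ∈ s
    · rw [hα a ha i, zero_mul, Dpow_zero, mul_zero]
    · rw [hv a ha, mul_zero, Dpow_zero, mul_zero]

variable (hc : ∀ a : A, {p : (Fin m → ℕ) × A' | c a p.1 p.2 ≠ 0}.Finite)
include hc

lemma exists_finset_bound_coeff (s : Finset A) :
    ∃ (I : Finset (Fin m → ℕ)) (B : Finset A'),
      ∀ a ∈ s, ∀ i α, c a i α ≠ 0 → i ∈ I ∧ α ∈ B := by
  obtain ⟨I, B, h⟩ := exists_finset_bound_of_finite hc s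
  exact ⟨I, B, fun a ha i α hne => h a ha (i, α) hne⟩

lemma finite_support_jstar {v : A → F} (hv : (support v).Finite) :
    (support (jstar D c v)).Finite := by
  obtain ⟨_, B, h⟩ := exists_finset_bound_coeff hc hv.toFinset
  refine B.finite_toSet.subset fun α hα => by_contra fun hαB => hα ?_
  exact jstar_apply_eq_zero (s := hv.toFinset) (by simp)
    fun a ha i => by_contra fun hne => hαB (h a ha i α hne).2

theorem pair_jstar_smodEq (hDcomm : ∀ μ ν (f : F), D μ (D ν f) = D ν (D μ f))
    {v : A → F} (hv : (support v).Finite) (g : A' → F) :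
    pair (jstar D c v) g ≡ pair v (jmap D c g) [SMOD divergences D] := by
  classical
  set s := hv.toFinset
  have hvs : ∀ a ∉ s, v a = 0 := by simp [s]
  obtain ⟨I, B, h⟩ := exists_finset_bound_coeff hc s
  have hlhs : pair (jstar D c v) g = ∑ a ∈ s, ∑ i ∈ I, ∑ α ∈ B,
      (-1 : F) ^ msize i * Dpow D i (c a i α * v a) * g α := by
    rw [pair_eq_sum (s := B) fun α hα => by_contra fun hαB => hα <|
      jstar_apply_eq_zero hvs fun a ha i => by_contra fun hne => hαB (h a ha i α hne).2]
    simp only [jstar_eq_sum hvs (fun a ha i α hne => (h a ha i α hne).1), Finset.sum_mul]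
    rw [Finset.sum_comm]
    exact Finset.sum_congr rfl fun a _ => Finset.sum_comm
  have hrhs : pair v (jmap D c g) = ∑ a ∈ s, ∑ i ∈ I, ∑ α ∈ B,
      v a * (c a i α * Dpow D i (g α)) := by
    rw [pair_eq_sum (s := s) fun a ha => by_contra fun has => ha (hvs a has)]
    refine Finset.sum_congr rfl fun a ha => ?_
    simp only [jmap_eq_sum (h a ha), Finset.mul_sum]
  rw [hlhs, hrhs]
  refine SModEq.sum fun a _ => SModEq.sum fun i _ => SModEq.sum fun α _ => ?_
  calc (-1 : F) ^ msize i * Dpow D i (c a i α * v a) * g α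
      = (-1 : F) ^ msize i * (Dpow D i (c a i α * v a) * g α) := mul_assoc _ _ _
    _ ≡ (-1 : F) ^ msize i * ((-1 : F) ^ msize i * (c a i α * v a * Dpow D i (g α)))
        [SMOD divergences D] := (hasAdjointSign_Dpow D hDcomm i _ _).neg_one_pow_mul _
    _ = v a * (c a i α * Dpow D i (g α)) := by
      rw [← mul_assoc, ← pow_add, Even.neg_one_pow ⟨_, rfl⟩]
      ring

end Operators

section Lam

variable {D : Fin m → Derivation 𝔽 F F} {Λc : A' → A' → (Fin m → ℕ) → F}

lemma Lam_eq_jmap (hΛ : ∀ α : A', {p : (Fin m → ℕ) × A' | Λc α p.2 p.1 ≠ 0}.Finite) :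
    Lam D Λc = jmap D (fun α i β => Λc α β i) := by
  funext g α
  obtain ⟨I, B, h⟩ := exists_finset_bound_coeff (c := fun α i β => Λc α β i) hΛ {α}
  have hα := h α (Finset.mem_singleton_self α)
  rw [jmap_eq_sum hα, Lam, finsum_finsum_eq_sum_sum fun β i hne =>
    (hα i β (left_ne_zero_of_mul hne)).symm, Finset.sum_comm]

lemma LamStar_eq_jstar : LamStar D Λc = jstar D (fun α i β => Λc α β i) := rfl

theorem pair_Lam_smodEq_neg (hDcomm : ∀ μ ν (f : F), D μ (D ν f) = D ν (D μ f))
    (hΛ : ∀ α : A', {p : (Fin m → ℕ) × A' | Λc α p.2 p.1 ≠ 0}.Finite)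
    (hskew : ∀ f : A' → F, {α : A' | f α ≠ 0}.Finite →
      ∀ α : A', LamStar D Λc f α = -Lam D Λc f α)
    {f : A' → F} (hf : (support f).Finite) (g : A' → F) :
    pair f (Lam D Λc g) ≡ -pair g (Lam D Λc f) [SMOD divergences D] := by
  have hstar : LamStar D Λc f = -Lam D Λc f := funext (hskew f hf)
  calc pair f (Lam D Λc g) = pair f (jmap D (fun α i β => Λc α β i) g) := by
        rw [Lam_eq_jmap hΛ]
    _ ≡ pair (jstar D (fun α i β => Λc α β i) f) g [SMOD divergences D] :=
        (pair_jstar_smodEq hΛ hDcomm hf g).symm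
    _ = -pair g (Lam D Λc f) := by rw [← LamStar_eq_jstar, hstar, pair_neg_left, pair_comm]

end Lam

section Horizontal

variable {D : Fin m → Derivation 𝔽 F F} {pa : A → Derivation 𝔽 F F} {Γ : A → Fin m → A → F}
  (hpafin : ∀ f : F, {a : A | pa a f ≠ 0}.Finite)
  (hΓfin : ∀ b : A, {p : Fin m × A | Γ b p.1 p.2 ≠ 0}.Finite)
  (hΓ : ∀ (μ : Fin m) (a : A) (f : F),
    D μ (pa a f) - pa a (D μ f) = ∑ᶠ b, Γ b μ a * pa b f)
  {ψ : A → F} (hψ : ∀ (a : A) (μ : Fin m), nabla D Γ ψ a μ = 0)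
include hpafin hΓfin hΓ hψ

lemma commute_ev_D (μ : Fin m) : Function.Commute (ev pa ψ) (D μ) := fun f => by
  have h := D_ev_sub_ev_D hpafin hΓfin hΓ ψ μ f
  simp only [hψ, zero_mul, ev, finsum_zero] at h
  exact (sub_eq_zero.1 h).symm

lemma commute_ev_Dpow (i : Fin m → ℕ) : Function.Commute (ev pa ψ) (Dpow D i) :=
  commute_Dpow D (commute_ev_D hpafin hΓfin hΓ hψ) i

lemma SModEq.ev {x y : F} (h : x ≡ y [SMOD divergences D]) :
    _root_.ev pa ψ x ≡ _root_.ev pa ψ y [SMOD divergences D] := by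
  rw [SModEq.sub_mem, ← isDiv_iff_mem_divergences] at h ⊢
  obtain ⟨χ, hχ⟩ := h
  refine ⟨fun μ => _root_.ev pa ψ (χ μ), ?_⟩
  simp only [← coe_evDerivation hpafin, ← map_sub, hχ, map_sum]
  exact Finset.sum_congr rfl fun μ _ => commute_ev_D hpafin hΓfin hΓ hψ μ (χ μ)

lemma ev_jmap {B C : Type*} {c : B → (Fin m → ℕ) → C → F}
    (hc : ∀ b : B, {p : (Fin m → ℕ) × C | c b p.1 p.2 ≠ 0}.Finite) (g : C → F) (a : B) :
    ev pa ψ (jmap D c g a) = jmap D (fun a i α => ev pa ψ (c a i α)) g a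
      + jmap D c (fun α => ev pa ψ (g α)) a := by
  obtain ⟨I, S, h⟩ := exists_finset_bound_coeff hc {a}
  have ha := h a (Finset.mem_singleton_self a)
  rw [jmap_eq_sum ha, jmap_eq_sum fun i α hne => ha i α fun h0 => hne (by rw [h0, ev_zero]),
    jmap_eq_sum ha, ← Finset.sum_add_distrib, ev_sum hpafin]
  refine Finset.sum_congr rfl fun i _ => ?_
  rw [ev_sum hpafin, ← Finset.sum_add_distrib]
  refine Finset.sum_congr rfl fun α _ => ?_
  rw [ev_mul hpafin, commute_ev_Dpow hpafin hΓfin hΓ hψ]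

lemma ev_Lam {Λc : A' → A' → (Fin m → ℕ) → F}
    (hΛ : ∀ α : A', {p : (Fin m → ℕ) × A' | Λc α p.2 p.1 ≠ 0}.Finite) (g : A' → F) (α : A') :
    ev pa ψ (Lam D Λc g α) = evLam D pa Λc ψ g α + Lam D Λc (fun β => ev pa ψ (g β)) α := by
  have hevΛ : ∀ α : A', {p : (Fin m → ℕ) × A' | ev pa ψ (Λc α p.2 p.1) ≠ 0}.Finite :=
    fun α => (hΛ α).subset fun p hp h0 => hp (by simp only [h0, ev_zero])
  change _ = Lam D (fun α β i => ev pa ψ (Λc α β i)) g α + _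
  rw [Lam_eq_jmap hΛ, Lam_eq_jmap hevΛ, ev_jmap hpafin hΓfin hΓ hψ hΛ]

theorem ev_pair_Lam {Λc : A' → A' → (Fin m → ℕ) → F}
    (hΛ : ∀ α : A', {p : (Fin m → ℕ) × A' | Λc α p.2 p.1 ≠ 0}.Finite)
    {f : A' → F} (hf : (support f).Finite) (g : A' → F) :
    ev pa ψ (pair f (Lam D Λc g)) = pair (fun α => ev pa ψ (f α)) (Lam D Λc g)
      + pair f (evLam D pa Λc ψ g) + pair f (Lam D Λc fun β => ev pa ψ (g β)) := by
  rw [ev_pair hpafin ψ hf, add_assoc, ← pair_add_right hf]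
  congr 2
  funext α
  exact ev_Lam hpafin hΓfin hΓ hψ hΛ g α

lemma ev_jstar {c : A → (Fin m → ℕ) → A' → F}
    (hc : ∀ a : A, {p : (Fin m → ℕ) × A' | c a p.1 p.2 ≠ 0}.Finite)
    (hcψ : ∀ a i α, ev pa ψ (c a i α) = 0) {v : A → F} (hv : (support v).Finite) (α : A') :
    ev pa ψ (jstar D c v α) = jstar D c (fun a => ev pa ψ (v a)) α := by
  have hvs : ∀ a ∉ hv.toFinset, v a = 0 := by simp
  obtain ⟨I, B, h⟩ := exists_finset_bound_coeff hc hv.toFinset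
  have hI : ∀ a ∈ hv.toFinset, ∀ i α, c a i α ≠ 0 → i ∈ I := fun a ha i α hne => (h a ha i α hne).1
  rw [jstar_eq_sum hvs hI, jstar_eq_sum (fun a ha => by rw [hvs a ha, ev_zero]) hI, ev_sum hpafin]
  refine Finset.sum_congr rfl fun a _ => ?_
  rw [ev_sum hpafin]
  refine Finset.sum_congr rfl fun i _ => ?_
  rw [ev_neg_one_pow_mul hpafin, commute_ev_Dpow hpafin hΓfin hΓ hψ, ev_mul hpafin, hcψ,
    zero_mul, zero_add]

end Horizontal

def hessianPair (pa : A → Derivation 𝔽 F F) (L : F) (χ η : A → F) : F :=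
  pair (fun a => ev pa χ (pa a L)) η

lemma hessianPair_comm {pa : A → Derivation 𝔽 F F}
    (hpacomm : ∀ a b (f : F), pa a (pa b f) = pa b (pa a f))
    (hpafin : ∀ f : F, {a : A | pa a f ≠ 0}.Finite) (L : F) (χ η : A → F) :
    hessianPair pa L χ η = hessianPair pa L η χ := by
  set s := (hpafin L).toFinset
  have hL : ∀ a ∉ s, pa a L = 0 := by simp [s]
  have hLL : ∀ a b, b ∉ s → pa b (pa a L) = 0 := fun a b hb => by rw [hpacomm, hL b hb, map_zero]
  have hsum : ∀ χ η : A → F, hessianPair pa L χ η = ∑ a ∈ s, ∑ b ∈ s, χ b * pa b (pa a L) * η a :=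
    fun χ η => by
      rw [hessianPair,
        pair_eq_sum (s := s) fun a ha => by_contra fun has => ha (by simp [hL a has])]
      simp only [ev_eq_sum (hLL _), Finset.sum_mul]
  rw [hsum, hsum, Finset.sum_comm]
  exact Finset.sum_congr rfl fun a _ => Finset.sum_congr rfl fun b _ => by rw [hpacomm]; ring

def bracket (D : Fin m → Derivation 𝔽 F F) (pa : A → Derivation 𝔽 F F)
    (jc : A → (Fin m → ℕ) → A' → F) (Λc : A' → A' → (Fin m → ℕ) → F) (K L : F) : F :=
  pair (vard D pa jc K) (Lam D Λc (vard D pa jc L))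

section Hamiltonian

variable {D : Fin m → Derivation 𝔽 F F} {pa : A → Derivation 𝔽 F F} {Γ : A → Fin m → A → F}
  {jc : A → (Fin m → ℕ) → A' → F} {Λc : A' → A' → (Fin m → ℕ) → F}
  (hDcomm : ∀ μ ν (f : F), D μ (D ν f) = D ν (D μ f))
  (hpafin : ∀ f : F, {a : A | pa a f ≠ 0}.Finite)
  (hΓfin : ∀ b : A, {p : Fin m × A | Γ b p.1 p.2 ≠ 0}.Finite)
  (hΓ : ∀ (μ : Fin m) (a : A) (f : F),
    D μ (pa a f) - pa a (D μ f) = ∑ᶠ b, Γ b μ a * pa b f)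
  (hjfin : ∀ a : A, {p : (Fin m → ℕ) × A' | jc a p.1 p.2 ≠ 0}.Finite)
  (hΛ : ∀ α : A', {p : (Fin m → ℕ) × A' | Λc α p.2 p.1 ≠ 0}.Finite)
  (hskew : ∀ f : A' → F, {α : A' | f α ≠ 0}.Finite →
    ∀ α : A', LamStar D Λc f α = -Lam D Λc f α)

include hpafin hjfin in
lemma finite_support_vard (R : F) : (support (vard D pa jc R)).Finite :=
  finite_support_jstar hjfin (hpafin R)

include hDcomm hpafin hjfin hΛ hskew in
theorem bracket_smodEq_neg_ev (K R : F) :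
    bracket D pa jc Λc K R ≡ -ev pa (hamv D pa jc Λc K) R [SMOD divergences D] := calc
  _ ≡ -pair (vard D pa jc R) (Lam D Λc (vard D pa jc K)) [SMOD divergences D] :=
    pair_Lam_smodEq_neg hDcomm hΛ hskew (finite_support_vard hpafin hjfin K) _
  _ ≡ -pair (fun a => pa a R) (hamv D pa jc Λc K) [SMOD divergences D] :=
    (pair_jstar_smodEq hjfin hDcomm (hpafin R) _).neg
  _ = -ev pa (hamv D pa jc Λc K) R := by rw [ev_eq_pair, pair_comm]

include hDcomm hpafin hΓfin hΓ hΛ hskew in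
theorem pair_evLam_smodEq_neg {ψ : A → F} (hψ : ∀ (a : A) (μ : Fin m), nabla D Γ ψ a μ = 0)
    {f g : A' → F} (hf : (support f).Finite) (hg : (support g).Finite) :
    pair f (evLam D pa Λc ψ g) ≡ -pair g (evLam D pa Λc ψ f) [SMOD divergences D] := by
  have hev : ∀ {h : A' → F}, (support h).Finite → (support fun α => ev pa ψ (h α)).Finite :=
    fun hh => hh.subset fun α hα h0 => hα (by simp [h0])
  have h₀ := SModEq.ev hpafin hΓfin hΓ hψ (pair_Lam_smodEq_neg hDcomm hΛ hskew hf g)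
  rw [ev_neg hpafin, ev_pair_Lam hpafin hΓfin hΓ hψ hΛ hf,
    ev_pair_Lam hpafin hΓfin hΓ hψ hΛ hg] at h₀
  -- the outer terms of the two Leibniz expansions cancel crosswise by skew-adjointness of `Λ`
  convert (h₀.sub (pair_Lam_smodEq_neg hDcomm hΛ hskew (hev hf) g)).sub
    (pair_Lam_smodEq_neg hDcomm hΛ hskew hf fun β => ev pa ψ (g β)) using 1 <;> abel

include hDcomm hpafin hΓfin hΓ hjfin in
theorem pair_ev_vard_smodEq {ψ : A → F} (hψ : ∀ (a : A) (μ : Fin m), nabla D Γ ψ a μ = 0)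
    (hψj : ∀ a i α, ev pa ψ (jc a i α) = 0) (L : F) (g : A' → F) :
    pair (fun α => ev pa ψ (vard D pa jc L α)) g
      ≡ hessianPair pa L ψ (jmap D jc g) [SMOD divergences D] := by
  have hfin : (support fun a => ev pa ψ (pa a L)).Finite :=
    (hpafin L).subset fun a ha h0 => ha (by simp [h0])
  rw [show (fun α => ev pa ψ (vard D pa jc L α)) = jstar D jc fun a => ev pa ψ (pa a L) from
    funext (ev_jstar hpafin hΓfin hΓ hψ hjfin hψj (hpafin L))]
  exact pair_jstar_smodEq hjfin hDcomm hfin g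

include hDcomm hpafin hΓfin hΓ hjfin hΛ hskew in
theorem bracket_bracket_smodEq
    (hnj : ∀ (φ : A' → F) (a : A) (μ : Fin m), nabla D Γ (jmap D jc φ) a μ = 0)
    (hevj : ∀ ψ : A → F, (∀ (a : A) (μ : Fin m), nabla D Γ ψ a μ = 0) →
      ∀ (a : A) (i : Fin m → ℕ) (α : A'), ev pa ψ (jc a i α) = 0)
    (K L M : F) :
    bracket D pa jc Λc K (bracket D pa jc Λc L M)
      ≡ hessianPair pa M (hamv D pa jc Λc K) (hamv D pa jc Λc L)
        - hessianPair pa L (hamv D pa jc Λc K) (hamv D pa jc Λc M)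
        + pair (vard D pa jc M) (evLam D pa Λc (hamv D pa jc Λc K) (vard D pa jc L))
        [SMOD divergences D] := by
  have hψ : ∀ a μ, nabla D Γ (hamv D pa jc Λc K) a μ = 0 := hnj _
  have hE := pair_ev_vard_smodEq hDcomm hpafin hΓfin hΓ hjfin hψ (hevj _ hψ)
  have hL := finite_support_vard (D := D) hpafin hjfin L
  calc _ ≡ -ev pa (hamv D pa jc Λc K) (bracket D pa jc Λc L M) [SMOD divergences D] :=
        bracket_smodEq_neg_ev hDcomm hpafin hjfin hΛ hskew K _
    _ = -(pair (fun α => ev pa (hamv D pa jc Λc K) (vard D pa jc L α)) (Lam D Λc (vard D pa jc M))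
          + pair (vard D pa jc L) (evLam D pa Λc (hamv D pa jc Λc K) (vard D pa jc M))
          + pair (vard D pa jc L)
              (Lam D Λc fun β => ev pa (hamv D pa jc Λc K) (vard D pa jc M β))) := by
      rw [bracket, ev_pair_Lam hpafin hΓfin hΓ hψ hΛ hL]
    _ ≡ -(hessianPair pa L (hamv D pa jc Λc K) (hamv D pa jc Λc M)
          + -pair (vard D pa jc M) (evLam D pa Λc (hamv D pa jc Λc K) (vard D pa jc L))
          + -hessianPair pa M (hamv D pa jc Λc K) (hamv D pa jc Λc L)) [SMOD divergences D] :=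
      (((hE L _).add (pair_evLam_smodEq_neg hDcomm hpafin hΓfin hΓ hΛ hskew hψ hL
        (finite_support_vard hpafin hjfin M))).add
        ((pair_Lam_smodEq_neg hDcomm hΛ hskew hL _).trans (hE M _).neg)).neg
    _ = _ := by abel

end Hamiltonian

theorem stmt_13_general
    {𝔽 : Type*} [Field 𝔽] {F : Type*} [CommRing F] [Algebra 𝔽 F]
    {m : ℕ} {A A' : Type*}
    (D : Fin m → Derivation 𝔽 F F)
    (hDcomm : ∀ μ ν (f : F), D μ (D ν f) = D ν (D μ f))
    (pa : A → Derivation 𝔽 F F)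
    (hpacomm : ∀ a b (f : F), pa a (pa b f) = pa b (pa a f))
    (hpafin : ∀ f : F, {a : A | pa a f ≠ 0}.Finite)
    (Γ : A → Fin m → A → F)
    (hΓfin : ∀ b : A, {p : Fin m × A | Γ b p.1 p.2 ≠ 0}.Finite)
    (hΓ : ∀ (μ : Fin m) (a : A) (f : F),
      D μ (pa a f) - pa a (D μ f) = ∑ᶠ b, Γ b μ a * pa b f)
    (jc : A → (Fin m → ℕ) → A' → F)
    (hjfin : ∀ a : A, {p : (Fin m → ℕ) × A' | jc a p.1 p.2 ≠ 0}.Finite)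
    (hnj : ∀ (φ : A' → F) (a : A) (μ : Fin m), nabla D Γ (jmap D jc φ) a μ = 0)
    (hevj : ∀ ψ : A → F, (∀ (a : A) (μ : Fin m), nabla D Γ ψ a μ = 0) →
      ∀ (a : A) (i : Fin m → ℕ) (α : A'), ev pa ψ (jc a i α) = 0)
    (Λc : A' → A' → (Fin m → ℕ) → F)
    (hΛfin : ∀ α : A',
      {p : (Fin m → ℕ) × A' | Λc α p.2 p.1 ≠ 0 ∨ Λc p.2 α p.1 ≠ 0}.Finite)
    (hskew : ∀ f : A' → F, {α : A' | f α ≠ 0}.Finite →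
      ∀ α : A', LamStar D Λc f α = -Lam D Λc f α)
    (K L M : F) :
    IsDiv D
      ((pair (vard D pa jc K)
            (Lam D Λc (vard D pa jc (pair (vard D pa jc L) (Lam D Λc (vard D pa jc M)))))
        + pair (vard D pa jc L)
            (Lam D Λc (vard D pa jc (pair (vard D pa jc M) (Lam D Λc (vard D pa jc K)))))
        + pair (vard D pa jc M)
            (Lam D Λc (vard D pa jc (pair (vard D pa jc K) (Lam D Λc (vard D pa jc L))))))
      - (pair (vard D pa jc K)
            (evLam D pa Λc (hamv D pa jc Λc L) (vard D pa jc M))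
        + pair (vard D pa jc L)
            (evLam D pa Λc (hamv D pa jc Λc M) (vard D pa jc K))
        + pair (vard D pa jc M)
            (evLam D pa Λc (hamv D pa jc Λc K) (vard D pa jc L)))) := by
  have hΛ : ∀ α, {p : (Fin m → ℕ) × A' | Λc α p.2 p.1 ≠ 0}.Finite :=
    fun α => (hΛfin α).subset fun _ => Or.inl
  have key := bracket_bracket_smodEq hDcomm hpafin hΓfin hΓ hjfin hΛ hskew hnj hevj
  simp only [bracket] at key
  rw [isDiv_iff_mem_divergences, ← SModEq.sub_mem]
  convert ((key K L M).add (key L M K)).add (key M K L) using 1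
  rw [hessianPair_comm hpacomm hpafin M (hamv D pa jc Λc L),
    hessianPair_comm hpacomm hpafin L (hamv D pa jc Λc M),
    hessianPair_comm hpacomm hpafin K (hamv D pa jc Λc M)]
  abel

/-- Main Theorem: representation of the Jacobi identity:
with `δR = j*(∂R)`, `φ(R) = j(Λ(δR))` and `{K,L} = ⟨δK, Λ(δL)⟩`, the cyclic sum
`⟨δK, Λ(δ{L,M})⟩ + c.p.` differs from `⟨δK, [ev_{φ(L)},Λ](δM)⟩ + c.p.`
by a divergence. -/
theorem stmt_13
    {𝔽 : Type*} [Field 𝔽] [CharZero 𝔽] {F : Type*} [CommRing F] [Algebra 𝔽 F]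
    {m : ℕ} {A A' : Type*}
    (D : Fin m → Derivation 𝔽 F F)
    (hDcomm : ∀ μ ν (f : F), D μ (D ν f) = D ν (D μ f))
    (pa : A → Derivation 𝔽 F F)
    (hpacomm : ∀ a b (f : F), pa a (pa b f) = pa b (pa a f))
    (hpafin : ∀ f : F, {a : A | pa a f ≠ 0}.Finite)
    (Γ : A → Fin m → A → F)
    (hΓfin : ∀ b : A, {p : Fin m × A | Γ b p.1 p.2 ≠ 0}.Finite)
    (hΓ : ∀ (μ : Fin m) (a : A) (f : F),
      D μ (pa a f) - pa a (D μ f) = ∑ᶠ b, Γ b μ a * pa b f)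
    (jc : A → (Fin m → ℕ) → A' → F)
    (hjfin : ∀ a : A, {p : (Fin m → ℕ) × A' | jc a p.1 p.2 ≠ 0}.Finite)
    (hnj : ∀ (φ : A' → F) (a : A) (μ : Fin m), nabla D Γ (jmap D jc φ) a μ = 0)
    (hevj : ∀ ψ : A → F, (∀ (a : A) (μ : Fin m), nabla D Γ ψ a μ = 0) →
      ∀ (a : A) (i : Fin m → ℕ) (α : A'), ev pa ψ (jc a i α) = 0)
    (Λc : A' → A' → (Fin m → ℕ) → F)
    (hΛfin : ∀ α : A',
      {p : (Fin m → ℕ) × A' | Λc α p.2 p.1 ≠ 0 ∨ Λc p.2 α p.1 ≠ 0}.Finite)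
    (hskew : ∀ f : A' → F, {α : A' | f α ≠ 0}.Finite →
      ∀ α : A', LamStar D Λc f α = -Lam D Λc f α)
    (K L M : F) :
    IsDiv D
      ((pair (vard D pa jc K)
            (Lam D Λc (vard D pa jc (pair (vard D pa jc L) (Lam D Λc (vard D pa jc M)))))
        + pair (vard D pa jc L)
            (Lam D Λc (vard D pa jc (pair (vard D pa jc M) (Lam D Λc (vard D pa jc K)))))
        + pair (vard D pa jc M)
            (Lam D Λc (vard D pa jc (pair (vard D pa jc K) (Lam D Λc (vard D pa jc L))))))
      - (pair (vard D pa jc K)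
            (evLam D pa Λc (hamv D pa jc Λc L) (vard D pa jc M))
        + pair (vard D pa jc L)
            (evLam D pa Λc (hamv D pa jc Λc M) (vard D pa jc K))
        + pair (vard D pa jc M)
            (evLam D pa Λc (hamv D pa jc Λc K) (vard D pa jc L)))) :=
  stmt_13_general D hDcomm pa hpacomm hpafin Γ hΓfin hΓ jc hjfin hnj hevj Λc hΛfin hskew K L M
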